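/- arXiv:1905.09189 — 2 statements merged into one kernel-verified Lean document; each statement's English description precedes it below -/
import Mathlib

section
/- Let Q ∈ ℤ[x_1,…,x_n] be an integral polynomial, λ ∈ ℤ, q ≥ 1 an integer, Φ : ℝ^n → ℂ an arbitrary function, and ξ ∈ ℝ^n. Then ∑_{a ∈ U_q} ∑_{𝐚 ∈ Z_q^n} F_q(a,𝐚) e(−λa/q) Φ(ξ − 𝐚/q) = ∑_{d | q} μ(q/d) ∑_{a ∈ Z_d} ∑_{𝐚 ∈ Z_d^n} F_d(a,𝐚) e(−λa/d) Φ(ξ − 𝐚/d), where μ is the Möbius function and the inner sums on the left run over all a ∈ U_q and all 𝐚 ∈ Z_q^n. -/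
open scoped BigOperators

noncomputable section

/-- `e(t) = e^{2πit}`. -/
def e2pi (t : ℝ) : ℂ := Complex.exp (2 * Real.pi * Complex.I * t)

/-- The normalized Weyl sum `F_d(a, 𝐚) = d^{-n} ∑_{s ∈ Z_d^n} e((a·Q(s) + s·𝐚)/d)`. -/
def weylF (n : ℕ) (Q : MvPolynomial (Fin n) ℤ) (d : ℕ) (a : ℤ) (av : Fin n → ℤ) : ℂ :=
  ((d : ℂ) ^ n)⁻¹ *
    ∑ s : Fin n → Fin d,
      e2pi (((a * MvPolynomial.eval (fun i => ((s i : ℕ) : ℤ)) Q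
        + ∑ i, ((s i : ℕ) : ℤ) * av i : ℤ) : ℝ) / (d : ℝ))

/-!
Sorting `a ∈ Z_d` by `gcd(a, d)` writes `a = g·a'` with `d = g·e` and `a' ∈ U_e`. Splitting
`s = t + e·u` with `t ∈ Z_e^n`, `u ∈ Z_g^n`, and using `Q(s) ≡ Q(t) (mod e)`, the sum over `u` in
`F_{ge}(g a', 𝐚)` is a complete character sum: it vanishes unless `g ∣ 𝐚`, and
`F_{ge}(g a', g 𝐛) = F_e(a', 𝐛)`. Hence `∑_{𝐚 ∈ Z_d^n} F_d(a, 𝐚) e(-λa/d) Φ(ξ - 𝐚/d)` depends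
only on `a/d = a'/e`, so its sum over `a ∈ Z_d` is the sum over `e ∣ d` of its sums over
`a' ∈ U_e`, and Möbius inversion gives the identity.
-/

open Finset

theorem e2pi_add (x y : ℝ) : e2pi (x + y) = e2pi x * e2pi y := by
  simp [e2pi, mul_add, Complex.exp_add]

theorem e2pi_sum {ι : Type*} (s : Finset ι) (f : ι → ℝ) :
    e2pi (∑ i ∈ s, f i) = ∏ i ∈ s, e2pi (f i) := by
  simp only [e2pi, Complex.ofReal_sum, mul_sum, Complex.exp_sum]

theorem e2pi_natCast_mul (k : ℕ) (x : ℝ) : e2pi (k * x) = e2pi x ^ k := by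
  rw [e2pi, e2pi, ← Complex.exp_nat_mul]
  push_cast
  ring_nf

theorem e2pi_eq_one_iff {x : ℝ} : e2pi x = 1 ↔ ∃ k : ℤ, x = k := by
  rw [e2pi, Complex.exp_eq_one_iff]
  refine exists_congr fun k => ?_
  rw [mul_comm (k : ℂ), mul_right_inj' Complex.two_pi_I_ne_zero]
  exact_mod_cast Iff.rfl

theorem e2pi_intCast (k : ℤ) : e2pi k = 1 :=
  e2pi_eq_one_iff.mpr ⟨k, rfl⟩

theorem e2pi_intCast_add (k : ℤ) (x : ℝ) : e2pi (k + x) = e2pi x := by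
  rw [e2pi_add, e2pi_intCast, one_mul]

theorem sum_fin_e2pi_mul_div {g : ℕ} (hg : 0 < g) (m : ℤ) :
    ∑ u : Fin g, e2pi (u * m / g) = if (g : ℤ) ∣ m then (g : ℂ) else 0 := by
  have hg' : (g : ℝ) ≠ 0 := by positivity
  simp_rw [mul_div_assoc, e2pi_natCast_mul, Fin.sum_univ_eq_sum_range (e2pi (m / g) ^ ·)]
  split_ifs with hdvd
  · obtain ⟨c, rfl⟩ := hdvd
    rw [Int.cast_mul, Int.cast_natCast, mul_div_cancel_left₀ _ hg', e2pi_intCast]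
    simp
  · have hne : e2pi (m / g) ≠ 1 := by
      rw [Ne, e2pi_eq_one_iff]
      rintro ⟨k, hk⟩
      rw [div_eq_iff hg'] at hk
      exact hdvd ⟨k, by exact_mod_cast hk.trans (mul_comm _ _)⟩
    rw [geom_sum_eq hne, ← e2pi_natCast_mul, mul_div_cancel₀ _ hg', e2pi_intCast, sub_self,
      zero_div]

theorem Nat.sum_range_eq_sum_divisors_sum_coprime {M : Type*} [AddCommMonoid M] {d : ℕ}
    (hd : 0 < d) (f : ℕ → M) :
    ∑ a ∈ range d, f a = ∑ e ∈ d.divisors, ∑ a ∈ range e with a.gcd e = 1, f (d / e * a) := by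
  have fiber : ∀ g ∈ d.divisors, ∑ a ∈ range d with a.gcd d = g, f a =
      ∑ a ∈ range (d / g) with a.gcd (d / g) = 1, f (d / (d / g) * a) := by
    intro g hg
    obtain ⟨e, rfl⟩ := Nat.dvd_of_mem_divisors hg
    have hg0 : 0 < g := Nat.pos_of_mul_pos_right hd
    rw [Nat.mul_div_cancel_left e hg0, Nat.mul_div_cancel _ (Nat.pos_of_mul_pos_left hd)]
    symm
    refine sum_nbij' (g * ·) (· / g) ?_ ?_ ?_ ?_ fun _ _ => rfl
    · simp only [mem_filter, mem_range, and_imp]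
      intro a ha hcop
      exact ⟨by gcongr, by rw [Nat.gcd_mul_left, hcop, mul_one]⟩
    · simp only [mem_filter, mem_range, and_imp]
      intro a ha hgcd
      obtain ⟨k, rfl⟩ : g ∣ a := hgcd ▸ Nat.gcd_dvd_left a (g * e)
      rw [Nat.mul_div_cancel_left k hg0]
      rw [Nat.gcd_mul_left, mul_eq_left₀ hg0.ne'] at hgcd
      exact ⟨(Nat.mul_lt_mul_left hg0).mp ha, hgcd⟩
    · intro a _
      exact Nat.mul_div_cancel_left a hg0
    · intro a ha
      have hgcd : a.gcd (g * e) = g := (mem_filter.mp ha).2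
      exact Nat.mul_div_cancel' (hgcd ▸ Nat.gcd_dvd_left a (g * e))
  rw [← sum_fiberwise_of_maps_to (t := d.divisors) (g := fun a => a.gcd d)
    (fun a _ => Nat.mem_divisors.mpr ⟨Nat.gcd_dvd_right a d, hd.ne'⟩), sum_congr rfl fiber]
  exact Nat.sum_div_divisors d fun e => ∑ a ∈ range e with a.gcd e = 1, f (d / e * a)

theorem MvPolynomial.eval_intModEq {σ : Type*} {m : ℤ} (Q : MvPolynomial σ ℤ) {x y : σ → ℤ}
    (h : ∀ i, x i ≡ y i [ZMOD m]) : eval x Q ≡ eval y Q [ZMOD m] := by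
  induction Q using MvPolynomial.induction_on with
  | C a => simp only [eval_C]; rfl
  | add p q hp hq => simpa using hp.add hq
  | mul_X p i hp => simpa using hp.mul (h i)

theorem Fintype.sum_pi_fin_mul {ι M : Type*} [Fintype ι] [DecidableEq ι] [AddCommMonoid M]
    {g e : ℕ} (f : (ι → Fin (g * e)) → M) :
    ∑ s, f s = ∑ u : ι → Fin g, ∑ t : ι → Fin e, f fun i => finProdFinEquiv (u i, t i) := by
  rw [← Fintype.sum_prod_type', ← ((Equiv.arrowProdEquivProdArrow ι _ _).symm.trans
    (Equiv.piCongrRight fun _ => finProdFinEquiv)).sum_comp]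
  rfl

theorem weylF_mul_mul_left_factor {n : ℕ} (Q : MvPolynomial (Fin n) ℤ) {g e : ℕ} (hg : 0 < g)
    (he : 0 < e) (a : ℤ) (av : Fin n → ℤ) :
    weylF n Q (g * e) (g * a) av = (((g * e : ℕ) : ℂ) ^ n)⁻¹ *
      ((∏ i, ∑ w : Fin g, e2pi (w * av i / g)) *
        ∑ t : Fin n → Fin e, e2pi ((g * (a * MvPolynomial.eval (fun i => ((t i : ℕ) : ℤ)) Q)
          + ∑ i, ((t i : ℕ) : ℤ) * av i : ℤ) / (g * e : ℕ))) := by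
  rw [weylF, Fintype.sum_pi_fin_mul, prod_univ_sum, Fintype.piFinset_univ, sum_mul_sum]
  congr 1
  refine sum_congr rfl fun u _ => sum_congr rfl fun t _ => ?_
  set s : Fin n → ℤ := fun i => (finProdFinEquiv (u i, t i) : ℕ)
  have hs : ∀ i, s i = t i + e * u i := fun i => by simp [s]
  obtain ⟨c, hc⟩ :
      (e : ℤ) ∣ MvPolynomial.eval s Q - MvPolynomial.eval (fun i => ((t i : ℕ) : ℤ)) Q :=
    (Q.eval_intModEq fun i => (Int.modEq_iff_dvd.mpr ⟨-u i, by rw [hs]; ring⟩)).symm.dvd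
  have hphase : g * a * MvPolynomial.eval s Q + ∑ i, s i * av i
      = g * e * (a * c) + e * ∑ i, ((u i : ℕ) : ℤ) * av i
        + (g * (a * MvPolynomial.eval (fun i => ((t i : ℕ) : ℤ)) Q)
          + ∑ i, ((t i : ℕ) : ℤ) * av i) := by
    simp only [hs, add_mul, sum_add_distrib, mul_sum, mul_assoc]
    linear_combination (g * a : ℤ) * hc
  have hg' : (g : ℝ) ≠ 0 := by positivity
  have he' : (e : ℝ) ≠ 0 := by positivity
  rw [← e2pi_sum, ← e2pi_add]
  conv_rhs => rw [← e2pi_intCast_add (a * c)]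
  congr 1
  rw [hphase]
  push_cast
  rw [← sum_div]
  field_simp
  ring

theorem weylF_mul_mul_left_eq_zero {n : ℕ} (Q : MvPolynomial (Fin n) ℤ) {g e : ℕ} (hg : 0 < g)
    (he : 0 < e) (a : ℤ) {av : Fin n → ℤ} (h : ¬ ∀ i, (g : ℤ) ∣ av i) :
    weylF n Q (g * e) (g * a) av = 0 := by
  obtain ⟨i, hi⟩ := not_forall.mp h
  have hzero : ∑ w : Fin g, e2pi (w * av i / g) = 0 := by
    rw [sum_fin_e2pi_mul_div hg, if_neg hi]
  rw [weylF_mul_mul_left_factor Q hg he, prod_eq_zero (mem_univ i) hzero, zero_mul, mul_zero]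

theorem weylF_mul_mul {n : ℕ} (Q : MvPolynomial (Fin n) ℤ) {g e : ℕ} (hg : 0 < g) (he : 0 < e)
    (a : ℤ) (b : Fin n → ℤ) :
    weylF n Q (g * e) (g * a) (fun i => g * b i) = weylF n Q e a b := by
  have hg' : (g : ℝ) ≠ 0 := by positivity
  rw [weylF_mul_mul_left_factor Q hg he, weylF]
  simp_rw [sum_fin_e2pi_mul_div hg, if_pos (dvd_mul_right _ _), prod_const, card_univ,
    Fintype.card_fin, mul_left_comm _ (g : ℤ), ← mul_sum, ← mul_add]
  have hphase : ∀ N : ℤ, ((g * N : ℤ) : ℝ) / (g * e : ℕ) = (N : ℝ) / e := fun N => by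
    push_cast
    rw [mul_div_mul_left _ _ hg']
  simp_rw [hphase]
  have hgC : (g : ℂ) ≠ 0 := by exact_mod_cast hg.ne'
  rw [Nat.cast_mul, mul_pow, mul_inv, mul_assoc, mul_left_comm _ ((g : ℂ) ^ n),
    inv_mul_cancel_left₀ (pow_ne_zero n hgC)]

def twistedWeylSum (n : ℕ) (Q : MvPolynomial (Fin n) ℤ) (lam : ℤ) (Φ : (Fin n → ℝ) → ℂ)
    (ξ : Fin n → ℝ) (d a : ℕ) : ℂ :=
  ∑ av : Fin n → Fin d,
    weylF n Q d (a : ℤ) (fun i => ((av i : ℕ) : ℤ)) *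
      e2pi (-((lam : ℝ) * (a : ℝ) / (d : ℝ))) *
      Φ (ξ - fun i => ((av i : ℕ) : ℝ) / (d : ℝ))

theorem twistedWeylSum_mul_mul {n : ℕ} (Q : MvPolynomial (Fin n) ℤ) (lam : ℤ)
    (Φ : (Fin n → ℝ) → ℂ) (ξ : Fin n → ℝ) {g e : ℕ} (hg : 0 < g) (he : 0 < e) (a : ℕ) :
    twistedWeylSum n Q lam Φ ξ (g * e) (g * a) = twistedWeylSum n Q lam Φ ξ e a := by
  have hg' : (g : ℝ) ≠ 0 := by positivity
  have hphase : -((lam : ℝ) * ((g * a : ℕ) : ℝ) / ((g * e : ℕ) : ℝ)) = -(lam * a / e) := by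
    push_cast
    rw [mul_left_comm, mul_div_mul_left _ _ hg']
  let scale : (Fin n → Fin e) → (Fin n → Fin (g * e)) := fun b i =>
    ⟨g * b i, Nat.mul_lt_mul_of_pos_left (b i).isLt hg⟩
  have scale_injective : Function.Injective scale := fun b b' h => funext fun i =>
    Fin.ext (Nat.eq_of_mul_eq_mul_left hg (congrArg Fin.val (congrFun h i)))
  unfold twistedWeylSum
  symm
  refine Fintype.sum_of_injective scale scale_injective _ _ (fun av hav => ?_) (fun b => ?_)
  · suffices ¬ ∀ i, (g : ℤ) ∣ ((av i : ℕ) : ℤ) by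
      rw [Nat.cast_mul, Nat.cast_mul, weylF_mul_mul_left_eq_zero Q hg he _ this, zero_mul, zero_mul]
    intro hdvd
    replace hdvd i : g ∣ av i := Int.natCast_dvd_natCast.mp (hdvd i)
    exact hav ⟨fun i => ⟨av i / g, Nat.div_lt_of_lt_mul (av i).isLt⟩,
      funext fun i => Fin.ext (Nat.mul_div_cancel' (hdvd i))⟩
  · have hscale : (fun i => ((scale b i : ℕ) : ℤ)) = fun i => (g : ℤ) * b i :=
      funext fun i => Nat.cast_mul g (b i)
    have hshift : (fun i => ((scale b i : ℕ) : ℝ) / ((g * e : ℕ) : ℝ)) = fun i => (b i : ℝ) / e :=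
      funext fun i => by
        rw [show ((scale b i : ℕ) : ℝ) = g * b i from Nat.cast_mul g (b i), Nat.cast_mul,
          mul_div_mul_left _ _ hg']
    rw [hphase, hscale, hshift, Nat.cast_mul, weylF_mul_mul Q hg he]

theorem stmt7_general (n : ℕ) (Q : MvPolynomial (Fin n) ℤ)
    (lam : ℤ) (q : ℕ) (hq : 1 ≤ q)
    (Φ : (Fin n → ℝ) → ℂ) (ξ : Fin n → ℝ) :
    ∑ a ∈ (Finset.range q).filter (fun a => Nat.gcd a q = 1),
      ∑ av : Fin n → Fin q,
        weylF n Q q (a : ℤ) (fun i => ((av i : ℕ) : ℤ)) *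
          e2pi (-((lam : ℝ) * (a : ℝ) / (q : ℝ))) *
          Φ (ξ - fun i => ((av i : ℕ) : ℝ) / (q : ℝ)) =
    ∑ d ∈ q.divisors, (ArithmeticFunction.moebius (q / d) : ℂ) *
      ∑ a ∈ Finset.range d, ∑ av : Fin n → Fin d,
        weylF n Q d (a : ℤ) (fun i => ((av i : ℕ) : ℤ)) *
          e2pi (-((lam : ℝ) * (a : ℝ) / (d : ℝ))) *
          Φ (ξ - fun i => ((av i : ℕ) : ℝ) / (d : ℝ)) := by
  set S := twistedWeylSum n Q lam Φ ξ
  have hsum_divisors : ∀ d > 0,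
      ∑ e ∈ d.divisors, ∑ a ∈ range e with a.gcd e = 1, S e a = ∑ a ∈ range d, S d a := by
    intro d hd
    rw [Nat.sum_range_eq_sum_divisors_sum_coprime hd]
    refine sum_congr rfl fun e he => sum_congr rfl fun a _ => ?_
    have hed := Nat.dvd_of_mem_divisors he
    have := twistedWeylSum_mul_mul Q lam Φ ξ (Nat.div_pos (Nat.le_of_dvd hd hed)
      (Nat.pos_of_mem_divisors he)) (Nat.pos_of_mem_divisors he) a
    rwa [Nat.div_mul_cancel hed, eq_comm] at this
  have hinv := ArithmeticFunction.sum_eq_iff_sum_mul_moebius_eq.mp hsum_divisors q hq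
  rw [Nat.sum_divisorsAntidiagonal'
    fun k d => (ArithmeticFunction.moebius k : ℂ) * ∑ a ∈ range d, S d a] at hinv
  exact hinv.symm

theorem stmt7 (n : ℕ) (hn : 1 ≤ n) (Q : MvPolynomial (Fin n) ℤ)
    (lam : ℤ) (q : ℕ) (hq : 1 ≤ q)
    (Φ : (Fin n → ℝ) → ℂ) (ξ : Fin n → ℝ) :
    ∑ a ∈ (Finset.range q).filter (fun a => Nat.gcd a q = 1),
      ∑ av : Fin n → Fin q,
        weylF n Q q (a : ℤ) (fun i => ((av i : ℕ) : ℤ)) *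
          e2pi (-((lam : ℝ) * (a : ℝ) / (q : ℝ))) *
          Φ (ξ - fun i => ((av i : ℕ) : ℝ) / (q : ℝ)) =
    ∑ d ∈ q.divisors, (ArithmeticFunction.moebius (q / d) : ℂ) *
      ∑ a ∈ Finset.range d, ∑ av : Fin n → Fin d,
        weylF n Q d (a : ℤ) (fun i => ((av i : ℕ) : ℤ)) *
          e2pi (-((lam : ℝ) * (a : ℝ) / (d : ℝ))) *
          Φ (ξ - fun i => ((av i : ℕ) : ℝ) / (d : ℝ)) :=
  stmt7_general n Q lam q hq Φ ξ
end
end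

section
/- Let Q ∈ ℤ[x_1,…,x_n] be an integral polynomial, q ≥ 2 an integer, and t ∈ U_q. Then |F_q(t,0)| ≤ max_{r ∈ Z_q} | ∑_{d | q} μ(q/d) ( d^{1−n} |V_r(d)| − 1 ) |, where μ is the Möbius function. -/
open scoped BigOperators

noncomputable section

/-- `|V_λ(d)| = #{s ∈ (ℤ/dℤ)^n : Q(s) = λ}`. -/
def Vcard (n : ℕ) (Q : MvPolynomial (Fin n) ℤ) (d : ℕ) (lam : ℤ) : ℕ :=
  Nat.card {s : Fin n → ZMod d //
    MvPolynomial.eval s (MvPolynomial.map (Int.castRingHom (ZMod d)) Q) = (lam : ZMod d)}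

/-!
Let `ψ(r) = e(t r / q)` on `ℤ/qℤ`; grouping the Weyl sum by the value of `Q` gives
`q^n F_q(t, 0) = ∑_r ψ(r) |V_r(q)|`. Twisting the Möbius sum `S(r)` of the bound by `ψ` and
summing over `r`, every term with `d < q` vanishes: both `r ↦ |V_r(d)|` and the constant `1` are
periodic with period `d`, on which `ψ` is nontrivial because `t` is a unit. Only `d = q` survives,
so `∑_r ψ(r) S(r) = q F_q(t, 0)`, and the triangle inequality bounds `q |F_q(t, 0)|` by
`q max_r |S(r)|`.
-/

open Finset

theorem AddChar.sum_mul_eq_zero_of_periodic {G R : Type*} [AddGroup G] [Fintype G] [CommRing R]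
    [IsDomain R] (ψ : AddChar G R) {c : G} (hc : ψ c ≠ 1) {f : G → R}
    (hf : Function.Periodic f c) : ∑ x, ψ x * f x = 0 := by
  have hshift : ∑ x, ψ x * f x = ψ c * ∑ x, ψ x * f x := by
    rw [mul_sum]
    refine (Fintype.sum_equiv (Equiv.addRight c) _ _ fun x => ?_).symm
    rw [Equiv.coe_addRight, AddChar.map_add_eq_mul, hf, mul_left_comm, mul_assoc]
  have : (ψ c - 1) * ∑ x, ψ x * f x = 0 := by rw [sub_mul, ← hshift, one_mul, sub_self]
  exact (mul_eq_zero.mp this).resolve_left (sub_ne_zero.mpr hc)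

theorem ZMod.stdAddChar_mul_natCast_ne_one {q t c : ℕ} [NeZero q] (ht : t.Coprime q)
    (hc : ¬ q ∣ c) : ZMod.stdAddChar ((t : ZMod q) * (c : ZMod q)) ≠ 1 := by
  rw [← (ZMod.stdAddChar (N := q)).map_zero_eq_one, ZMod.injective_stdAddChar.ne_iff, Ne,
    ((ZMod.isUnit_iff_coprime t q).mpr ht).mul_right_eq_zero, ZMod.natCast_eq_zero_iff]
  exact hc

theorem ZMod.bijective_natCast_finVal (q : ℕ) [NeZero q] :
    Function.Bijective fun s : Fin q => ((s : ℕ) : ZMod q) := by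
  refine (Fintype.bijective_iff_injective_and_card _).mpr ⟨fun a b h => ?_, by simp⟩
  have := congrArg ZMod.val h
  rwa [ZMod.val_natCast_of_lt a.isLt, ZMod.val_natCast_of_lt b.isLt, ← Fin.ext_iff] at this

section WeylSum

variable {n : ℕ} (Q : MvPolynomial (Fin n) ℤ)

def primitiveDensity (q : ℕ) (r : ℤ) : ℂ :=
  ∑ d ∈ q.divisors, (ArithmeticFunction.moebius (q / d) : ℂ) *
    ((d : ℂ) ^ ((1 : ℤ) - (n : ℤ)) * (Vcard n Q d r : ℂ) - 1)

theorem Vcard_congr {d : ℕ} {a b : ℤ} (h : (a : ZMod d) = b) :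
    Vcard n Q d a = Vcard n Q d b := by
  rw [Vcard, Vcard, h]

theorem periodic_Vcard_val {d q : ℕ} [NeZero q] (hd : d ∣ q) :
    Function.Periodic (fun r : ZMod q => Vcard n Q d (r.val : ℤ)) (d : ZMod q) := by
  intro r
  apply Vcard_congr
  rw [Int.cast_natCast, Int.cast_natCast, ZMod.natCast_val, ZMod.natCast_val, ZMod.cast_add hd,
    ZMod.cast_natCast hd, ZMod.natCast_self, add_zero]

theorem sum_stdAddChar_mul_Vcard_eq_zero {d q t : ℕ} [NeZero q] (ht : t.Coprime q) (hd : d ∣ q)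
    (hdq : d ≠ q) :
    ∑ r : ZMod q, ZMod.stdAddChar ((t : ZMod q) * r) * (Vcard n Q d r.val : ℂ) = 0 :=
  (ZMod.stdAddChar.mulShift (t : ZMod q)).sum_mul_eq_zero_of_periodic
    (ZMod.stdAddChar_mul_natCast_ne_one ht fun h => hdq (Nat.dvd_antisymm hd h))
    ((periodic_Vcard_val Q hd).comp _)

theorem sum_stdAddChar_mul_Vcard_self (q : ℕ) [NeZero q] (a : ZMod q) :
    ∑ r : ZMod q, ZMod.stdAddChar (a * r) * (Vcard n Q q r.val : ℂ) =
      ∑ u : Fin n → ZMod q,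
        ZMod.stdAddChar (a * MvPolynomial.eval u (MvPolynomial.map (Int.castRingHom _) Q)) := by
  classical
  rw [← Fintype.sum_fiberwise'
    (fun u : Fin n → ZMod q => MvPolynomial.eval u (MvPolynomial.map (Int.castRingHom _) Q))
    (fun r => ZMod.stdAddChar (a * r))]
  refine sum_congr rfl fun r _ => ?_
  rw [sum_const, card_univ, nsmul_eq_mul, mul_comm, Vcard, Nat.card_eq_fintype_card]
  push_cast [ZMod.natCast_zmod_val]
  rfl

theorem e2pi_intCast_div (q : ℕ) [NeZero q] (x : ℤ) :
    e2pi ((x : ℝ) / q) = ZMod.stdAddChar (x : ZMod q) := by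
  rw [e2pi, ZMod.stdAddChar_coe]
  push_cast
  ring_nf

theorem weylF_zero_eq (q : ℕ) [NeZero q] (a : ℤ) :
    weylF n Q q a 0 = ((q : ℂ) ^ n)⁻¹ * ∑ u : Fin n → ZMod q,
      ZMod.stdAddChar
        ((a : ZMod q) * MvPolynomial.eval u (MvPolynomial.map (Int.castRingHom _) Q)) := by
  rw [weylF]
  congr 1
  refine Fintype.sum_bijective _ (ZMod.bijective_natCast_finVal q).comp_left _ _ fun s => ?_
  simp only [Pi.zero_apply, mul_zero, sum_const_zero, add_zero]
  rw [e2pi_intCast_div, Int.cast_mul,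
    ← eq_intCast (Int.castRingHom (ZMod q)) (MvPolynomial.eval _ Q), MvPolynomial.map_eval]
  congr 4
  funext i
  simp

theorem sum_stdAddChar_mul_primitiveDensity {q t : ℕ} [NeZero q] (hq : q ≠ 1)
    (ht : t.Coprime q) :
    ∑ r : ZMod q, ZMod.stdAddChar ((t : ZMod q) * r) * primitiveDensity Q q r.val =
      q * weylF n Q q t 0 := by
  set ψ : ZMod q → ℂ := fun r => ZMod.stdAddChar ((t : ZMod q) * r)
  have hconst : ∑ r, ψ r = 0 := by
    simpa using (ZMod.stdAddChar.mulShift (t : ZMod q)).sum_mul_eq_zero_of_periodic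
      (ZMod.stdAddChar_mul_natCast_ne_one ht (c := 1) (by rwa [Nat.dvd_one]))
      (f := fun _ => (1 : ℂ)) fun _ => rfl
  have hsplit : ∀ d, ∑ r, ψ r * ((ArithmeticFunction.moebius (q / d) : ℂ) *
      ((d : ℂ) ^ ((1 : ℤ) - (n : ℤ)) * (Vcard n Q d r.val : ℂ) - 1)) =
      (ArithmeticFunction.moebius (q / d) : ℂ) *
        ((d : ℂ) ^ ((1 : ℤ) - (n : ℤ)) * ∑ r, ψ r * (Vcard n Q d r.val : ℂ)) := by
    intro d
    calc _ = (ArithmeticFunction.moebius (q / d) : ℂ) *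
            ((d : ℂ) ^ ((1 : ℤ) - (n : ℤ)) * ∑ r, ψ r * (Vcard n Q d r.val : ℂ)) -
          (ArithmeticFunction.moebius (q / d) : ℂ) * ∑ r, ψ r := by
          rw [mul_sum, mul_sum, mul_sum, ← sum_sub_distrib]
          exact sum_congr rfl fun r _ => by ring
      _ = _ := by rw [hconst, mul_zero, sub_zero]
  have hself : ∑ r, ψ r * (Vcard n Q q r.val : ℂ) = (q : ℂ) ^ n * weylF n Q q t 0 := by
    rw [sum_stdAddChar_mul_Vcard_self, weylF_zero_eq, Int.cast_natCast,
      mul_inv_cancel_left₀ (pow_ne_zero n (NeZero.ne (q : ℂ)))]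
  have hproper : ∀ d ∈ q.divisors, d ≠ q → (ArithmeticFunction.moebius (q / d) : ℂ) *
      ((d : ℂ) ^ ((1 : ℤ) - (n : ℤ)) * ∑ r, ψ r * (Vcard n Q d r.val : ℂ)) = 0 :=
    fun d hd hdq => by
      rw [sum_stdAddChar_mul_Vcard_eq_zero Q ht (Nat.dvd_of_mem_divisors hd) hdq, mul_zero,
        mul_zero]
  simp_rw [primitiveDensity, mul_sum]
  rw [sum_comm, sum_congr rfl fun d _ => hsplit d,
    sum_eq_single_of_mem q (Nat.mem_divisors_self q (NeZero.ne q)) hproper, hself,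
    Nat.div_self (NeZero.pos q), ArithmeticFunction.moebius_apply_one, Int.cast_one, one_mul,
    ← mul_assoc, ← zpow_natCast, ← zpow_add₀ (NeZero.ne (q : ℂ)), sub_add_cancel,
    zpow_one]

end WeylSum

theorem stmt12_general (n : ℕ) (Q : MvPolynomial (Fin n) ℤ)
    (q : ℕ) (hq : 2 ≤ q) (t : ℕ) (htq : Nat.gcd t q = 1) :
    ‖weylF n Q q (t : ℤ) 0‖ ≤
      ⨆ r : Fin q,
        ‖∑ d ∈ q.divisors, (ArithmeticFunction.moebius (q / d) : ℂ) *
          ((d : ℂ) ^ ((1 : ℤ) - (n : ℤ)) * (Vcard n Q d ((r : ℕ) : ℤ) : ℂ) - 1)‖ := by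
  have : NeZero q := ⟨by omega⟩
  set M := ⨆ r : Fin q, ‖primitiveDensity Q q ((r : ℕ) : ℤ)‖
  have hM (r : ZMod q) : ‖primitiveDensity Q q r.val‖ ≤ M :=
    le_ciSup (f := fun r : Fin q => ‖primitiveDensity Q q ((r : ℕ) : ℤ)‖)
      (Finite.bddAbove_range _) ⟨r.val, r.val_lt⟩
  refine le_of_mul_le_mul_left ?_ (by positivity : (0 : ℝ) < q)
  calc (q : ℝ) * ‖weylF n Q q t 0‖
      = ‖∑ r : ZMod q, ZMod.stdAddChar ((t : ZMod q) * r) * primitiveDensity Q q r.val‖ := by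
        rw [sum_stdAddChar_mul_primitiveDensity Q (by omega) htq, norm_mul, Complex.norm_natCast]
    _ ≤ ∑ r : ZMod q, ‖primitiveDensity Q q r.val‖ :=
        (norm_sum_le _ _).trans_eq <| sum_congr rfl fun r _ => by
          rw [norm_mul, ZMod.stdAddChar_apply, Circle.norm_coe, one_mul]
    _ ≤ ∑ _r : ZMod q, M := sum_le_sum fun r _ => hM r
    _ = q * M := by rw [sum_const, card_univ, ZMod.card, nsmul_eq_mul]

theorem stmt12 (n : ℕ) (hn : 1 ≤ n) (Q : MvPolynomial (Fin n) ℤ)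
    (q : ℕ) (hq : 2 ≤ q) (t : ℕ) (ht : t < q) (htq : Nat.gcd t q = 1) :
    ‖weylF n Q q (t : ℤ) 0‖ ≤
      ⨆ r : Fin q,
        ‖∑ d ∈ q.divisors, (ArithmeticFunction.moebius (q / d) : ℂ) *
          ((d : ℂ) ^ ((1 : ℤ) - (n : ℤ)) * (Vcard n Q d ((r : ℕ) : ℤ) : ℂ) - 1)‖ :=
  stmt12_general n Q q hq t htq
end
end
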